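/- For integers 1 ≤ m ≤ k and n ≥ k+1, op_{n,k}^m = Σ_{j=m+1}^{k+1} Σ_{i=1}^{n−k} c_i · op_{n−i,k}^j, where c_i is the i-th Catalan number. -/

import Mathlib

/-
Split an ordered preference set `a` with leading term `m` at the first index `i` with
`a[i] > m + i`. Before that index the cars fill the spaces `m, m + 1, …, m + i - 1`, and subtracting
`m - 1` turns the prefix into a nondecreasing list `u` with `1 ≤ u[r] ≤ r + 1`; there are
`catalan i` of those (first-return decomposition). Every later car prefers a space above
`m + i`, so subtracting `i` from the rest gives an ordered preference set of length `n - i`,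
with the same flaws and leading term `j = a[i] - i > m`. Such a split exists because without a
jump exactly `m - 1 < k` cars fail, and `j ≤ k + 1`, `i ≤ n - k` because a set with leading
term `j` has at least `j - 1` flaws and at most as many flaws as cars.
-/

/-- The first unoccupied parking space `j` with `p ≤ j ≤ n`, if any. -/
def firstFree (n : ℕ) (occ : Finset ℕ) (p : ℕ) : Option ℕ :=
  (List.range' p (n + 1 - p)).find? (fun j => decide (j ∉ occ))

/-- Number of cars that fail to park, processing the preference list in order,
given the set of already occupied spaces. -/
def flawsFrom (n : ℕ) : List ℕ → Finset ℕ → ℕ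
  | [], _ => 0
  | p :: rest, occ =>
    match firstFree n occ p with
    | none => flawsFrom n rest occ + 1
    | some j => flawsFrom n rest (insert j occ)

/-- The number of flaws (unparked cars) of a preference list of length `n`. -/
def flaws (n : ℕ) (a : List ℕ) : ℕ := flawsFrom n a ∅

/-- A preference set of length `n`: a list of length `n` with entries in `{1, …, n}`. -/
def IsPrefSet (n : ℕ) (a : List ℕ) : Prop :=
  a.length = n ∧ ∀ x ∈ a, 1 ≤ x ∧ x ≤ n

/-- An ordered preference set of length `n`: a nondecreasing preference set. -/
def IsOrderedPrefSet (n : ℕ) (a : List ℕ) : Prop :=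
  IsPrefSet n a ∧ a.Pairwise (· ≤ ·)

/-- `op_{n,≥k}`: number of ordered preference sets of length `n` with at least `k` flaws. -/
noncomputable def opGe (n k : ℕ) : ℕ :=
  {a : List ℕ | IsOrderedPrefSet n a ∧ k ≤ flaws n a}.ncard

/-- `op_{n,≤k}`: number of ordered preference sets of length `n` with at most `k` flaws. -/
noncomputable def opLe (n k : ℕ) : ℕ :=
  {a : List ℕ | IsOrderedPrefSet n a ∧ flaws n a ≤ k}.ncard

/-- `op_{n,k}`: number of ordered preference sets of length `n` with exactly `k` flaws. -/
noncomputable def opEq (n k : ℕ) : ℕ :=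
  {a : List ℕ | IsOrderedPrefSet n a ∧ flaws n a = k}.ncard

/-- `op_{n,≥k,≤l}`: at least `k` flaws, every entry at most `l`. -/
noncomputable def opGeLe (n k l : ℕ) : ℕ :=
  {a : List ℕ | IsOrderedPrefSet n a ∧ k ≤ flaws n a ∧ ∀ x ∈ a, x ≤ l}.ncard

/-- `op_{n,≥k,≤l}^m`: at least `k` flaws, every entry at most `l`, leading term `m`. -/
noncomputable def opGeLeLead (n k l m : ℕ) : ℕ :=
  {a : List ℕ | IsOrderedPrefSet n a ∧ k ≤ flaws n a ∧ (∀ x ∈ a, x ≤ l) ∧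
    a.head? = some m}.ncard

/-- `op_{n,k,≤l}^m`: exactly `k` flaws, every entry at most `l`, leading term `m`. -/
noncomputable def opEqLeLead (n k l m : ℕ) : ℕ :=
  {a : List ℕ | IsOrderedPrefSet n a ∧ flaws n a = k ∧ (∀ x ∈ a, x ≤ l) ∧
    a.head? = some m}.ncard

/-- `op_{n,k}^m`: exactly `k` flaws, leading term `m`. -/
noncomputable def opLead (n k m : ℕ) : ℕ :=
  {a : List ℕ | IsOrderedPrefSet n a ∧ flaws n a = k ∧ a.head? = some m}.ncard

/-- `op_{n,k,=l}^m`: exactly `k` flaws, maximal entry exactly `l`, leading term `m`. -/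
noncomputable def opMaxLead (n k l m : ℕ) : ℕ :=
  {a : List ℕ | IsOrderedPrefSet n a ∧ flaws n a = k ∧ (∀ x ∈ a, x ≤ l) ∧ l ∈ a ∧
    a.head? = some m}.ncard

/-- Binomial coefficient `C(a, b)` with an integer lower index, which is `0`
when `b < 0` (the standard convention). -/
def chooseInt (a : ℕ) (b : ℤ) : ℕ := if 0 ≤ b then a.choose b.toNat else 0

lemma List.map_sub_map_add_cancel {l : List ℕ} {t : ℕ} (h : ∀ x ∈ l, t ≤ x) :
    (l.map (· - t)).map (· + t) = l := by
  rw [List.map_map]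
  exact (List.map_congr_left fun x hx => Nat.sub_add_cancel (h x hx)).trans (List.map_id' l)

lemma List.Pairwise.head_le {α : Type*} [Preorder α] {l : List α} (hl : l.Pairwise (· ≤ ·))
    {h x : α} (hh : h ∈ l.head?) (hx : x ∈ l) : h ≤ x := by
  obtain ⟨y, l, rfl⟩ := List.exists_cons_of_ne_nil (List.ne_nil_of_mem hx)
  obtain rfl : y = h := by simpa using hh
  rcases List.mem_cons.mp hx with rfl | hx
  · exact le_rfl
  · exact List.rel_of_pairwise_cons hl hx

lemma finite_setOf_isPrefSet (n : ℕ) : {a | IsPrefSet n a}.Finite := by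
  refine ((List.finite_length_eq (Fin (n + 1)) n).image (List.map Fin.val)).subset ?_
  rintro a ⟨hlen, hbound⟩
  refine ⟨a.map (Fin.ofNat (n + 1)), by simpa using hlen, ?_⟩
  rw [List.map_map]
  refine (List.map_congr_left fun x hx => ?_).trans (List.map_id a)
  simp only [Function.comp_apply, Fin.val_ofNat, id]
  exact Nat.mod_eq_of_lt (Nat.lt_succ_of_le (hbound x hx).2)

lemma ncard_eq_sum_of_bij {α ι β : Type*} {S : Set α} (T : Finset ι) {U : ι → Set β}
    (hU : ∀ i, (U i).Finite) (f : ι → β → α) (hmaps : ∀ i ∈ T, ∀ b ∈ U i, f i b ∈ S)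
    (hinj : ∀ i ∈ T, ∀ i' ∈ T, ∀ b ∈ U i, ∀ b' ∈ U i', f i b = f i' b' → i = i' ∧ b = b')
    (hsurj : ∀ a ∈ S, ∃ i ∈ T, ∃ b ∈ U i, f i b = a) :
    S.ncard = ∑ i ∈ T, (U i).ncard := by
  classical
  have hS : S = ↑((T.sigma fun i => (hU i).toFinset).image fun x => f x.1 x.2) := by
    ext a
    simp only [Finset.coe_image, Set.mem_image, Finset.mem_coe, Finset.mem_sigma,
      Set.Finite.mem_toFinset, Sigma.exists]
    exact ⟨fun ha => by obtain ⟨i, hi, b, hb, rfl⟩ := hsurj a ha; exact ⟨i, b, ⟨hi, hb⟩, rfl⟩,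
      by rintro ⟨i, b, ⟨hi, hb⟩, rfl⟩; exact hmaps i hi b hb⟩
  rw [hS, Set.ncard_coe_finset, Finset.card_image_of_injOn, Finset.card_sigma]
  · exact Finset.sum_congr rfl fun i _ => (Set.ncard_eq_toFinset_card _ (hU i)).symm
  · rintro ⟨i, b⟩ hib ⟨i', b'⟩ hib' heq
    simp only [Finset.coe_sigma, Set.mem_sigma_iff, Finset.mem_coe, Set.Finite.mem_toFinset]
      at hib hib'
    obtain ⟨rfl, rfl⟩ := hinj i hib.1 i' hib'.1 b hib.2 b' hib'.2 heq
    rfl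

/-- Flaws of a nondecreasing preference list when `s` is the last occupied space: for such lists
the occupied spaces at or above the current preference always form an interval ending at `s`. -/
def sortedFlaws (n : ℕ) : ℕ → List ℕ → ℕ
  | _, [] => 0
  | s, p :: l => if max p (s + 1) ≤ n then sortedFlaws n (max p (s + 1)) l
      else sortedFlaws n s l + 1

lemma find?_range'_lt (s : ℕ) : ∀ p len : ℕ,
    (List.range' p len).find? (fun j => decide (s < j)) =
      if max p (s + 1) < p + len then some (max p (s + 1)) else none
  | p, 0 => by simp
  | p, len + 1 => by
    rw [List.range'_succ, List.find?_cons, find?_range'_lt s (p + 1) len]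
    by_cases hsp : s < p
    · simp [hsp]
    · simp only [hsp, decide_false]
      rw [Nat.max_eq_right (by omega), Nat.max_eq_right (by omega)]
      congr 1
      simp only [eq_iff_iff]
      omega

lemma firstFree_eq_of_occupied_iff {n s p : ℕ} {occ : Finset ℕ}
    (hocc : ∀ j, p ≤ j → (j ∈ occ ↔ j ≤ s)) :
    firstFree n occ p = if max p (s + 1) ≤ n then some (max p (s + 1)) else none := by
  rw [firstFree, List.find?_congr (p₂ := fun j => decide (s < j)), find?_range'_lt]
  · congr 1
    simp only [eq_iff_iff]
    omega
  · intro j hj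
    simp [hocc j (List.mem_range'_1.mp hj).1]

lemma flawsFrom_eq_sortedFlaws (n : ℕ) : ∀ (l : List ℕ) (occ : Finset ℕ) (b s : ℕ),
    l.Pairwise (· ≤ ·) → (∀ x ∈ l, b ≤ x) → (∀ j, b ≤ j → (j ∈ occ ↔ j ≤ s)) →
      flawsFrom n l occ = sortedFlaws n s l
  | [], _, _, _, _, _, _ => rfl
  | p :: l, occ, b, s, hsort, hb, hocc => by
    rw [List.pairwise_cons] at hsort
    have hpb : b ≤ p := hb p List.mem_cons_self
    have hocc' : ∀ j, p ≤ j → (j ∈ occ ↔ j ≤ s) := fun j hj => hocc j (hpb.trans hj)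
    rw [flawsFrom, firstFree_eq_of_occupied_iff hocc', sortedFlaws]
    split_ifs
    · refine flawsFrom_eq_sortedFlaws n l _ p _ hsort.2 hsort.1 fun j hj => ?_
      rw [Finset.mem_insert, hocc' j hj]
      omega
    · rw [flawsFrom_eq_sortedFlaws n l occ p s hsort.2 hsort.1 hocc']

lemma flaws_eq_sortedFlaws {n : ℕ} {a : List ℕ} (hsort : a.Pairwise (· ≤ ·))
    (hpos : ∀ x ∈ a, 1 ≤ x) : flaws n a = sortedFlaws n 0 a :=
  flawsFrom_eq_sortedFlaws n a ∅ 1 0 hsort hpos (by simp; omega)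

lemma flawsFrom_le_length (n : ℕ) : ∀ (l : List ℕ) (occ : Finset ℕ), flawsFrom n l occ ≤ l.length
  | [], _ => le_rfl
  | p :: l, occ => by
    rw [flawsFrom]
    split
    · exact Nat.succ_le_succ (flawsFrom_le_length n l occ)
    · exact (flawsFrom_le_length n l _).trans (Nat.le_succ _)

lemma flaws_le_length (n : ℕ) (a : List ℕ) : flaws n a ≤ a.length :=
  flawsFrom_le_length n a ∅

namespace sortedFlaws

lemma eq_zero_state_of_forall_lt {n s : ℕ} : ∀ {l : List ℕ}, (∀ x ∈ l, s < x) →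
    sortedFlaws n s l = sortedFlaws n 0 l
  | [], _ => rfl
  | p :: l, h => by
    have hp := h p List.mem_cons_self
    simp only [sortedFlaws, Nat.max_eq_left hp, Nat.max_eq_left (show 0 + 1 ≤ p by omega)]
    rw [eq_zero_state_of_forall_lt fun x hx => h x (List.mem_cons_of_mem _ hx)]

lemma map_add (n s t : ℕ) : ∀ l : List ℕ,
    sortedFlaws (n + t) (s + t) (l.map (· + t)) = sortedFlaws n s l
  | [] => rfl
  | p :: l => by
    have hmax : max (p + t) (s + t + 1) = max p (s + 1) + t := by omega
    simp only [List.map_cons, sortedFlaws, hmax, Nat.add_le_add_iff_right]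
    split_ifs <;> simp only [map_add]

lemma length_le (n : ℕ) : ∀ (s : ℕ) (l : List ℕ), l.length ≤ sortedFlaws n s l + (n - s)
  | _, [] => Nat.zero_le _
  | s, p :: l => by
    simp only [sortedFlaws, List.length_cons]
    split_ifs
    · have := length_le n (max p (s + 1)) l
      omega
    · have := length_le n s l
      omega

end sortedFlaws

/-- `DiagBounded c l` says `l[r] ≤ c + r` for every index `r`. -/
def DiagBounded : ℕ → List ℕ → Prop
  | _, [] => True
  | c, x :: l => x ≤ c ∧ DiagBounded (c + 1) l

namespace DiagBounded

@[simp] lemma nil (c : ℕ) : DiagBounded c [] := trivial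

@[simp] lemma cons {c x : ℕ} {l : List ℕ} :
    DiagBounded c (x :: l) ↔ x ≤ c ∧ DiagBounded (c + 1) l :=
  Iff.rfl

lemma append_iff : ∀ {c : ℕ} {p q : List ℕ},
    DiagBounded c (p ++ q) ↔ DiagBounded c p ∧ DiagBounded (c + p.length) q
  | c, [], q => by simp
  | c, x :: p, q => by
    rw [List.cons_append, cons, cons, append_iff, List.length_cons, and_assoc,
      show c + 1 + p.length = c + (p.length + 1) by omega]

lemma map_add_iff : ∀ {c t : ℕ} {l : List ℕ}, DiagBounded (c + t) (l.map (· + t)) ↔ DiagBounded c l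
  | c, t, [] => by simp
  | c, t, x :: l => by
    rw [List.map_cons, cons, cons, Nat.add_right_comm, map_add_iff, Nat.add_le_add_iff_right]

lemma map_add_pred {m : ℕ} {u : List ℕ} (hm : 1 ≤ m) (hu : DiagBounded 1 u) :
    DiagBounded m (u.map (· + (m - 1))) := by
  have := map_add_iff (c := 1) (t := m - 1) |>.mpr hu
  rwa [Nat.add_sub_cancel' hm] at this

lemma map_sub : ∀ {c t : ℕ} {l : List ℕ}, DiagBounded (c + t) l → DiagBounded c (l.map (· - t))
  | c, t, [], _ => trivial
  | c, t, x :: l, ⟨hx, hl⟩ => ⟨by dsimp only; omega, map_sub (by rwa [Nat.add_right_comm])⟩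

lemma mono : ∀ {c c' : ℕ} {l : List ℕ}, c ≤ c' → DiagBounded c l → DiagBounded c' l
  | _, _, [], _, _ => trivial
  | _, _, _ :: _, hc, ⟨hx, hl⟩ => ⟨hx.trans hc, mono (Nat.add_le_add_right hc 1) hl⟩

lemma lt_add_length : ∀ {c : ℕ} {l : List ℕ}, DiagBounded c l → ∀ x ∈ l, x < c + l.length
  | _, [], _, _, hx => absurd hx List.not_mem_nil
  | c, y :: l, ⟨hy, hl⟩, x, hx => by
    rcases List.mem_cons.mp hx with rfl | hx
    · simp only [List.length_cons]; omega
    · have := lt_add_length hl x hx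
      simp only [List.length_cons]; omega

lemma exists_append_eq : ∀ (c : ℕ) (l : List ℕ),
    ∃ p q, l = p ++ q ∧ DiagBounded c p ∧ ∀ x ∈ q.head?, c + p.length < x
  | _, [] => ⟨[], [], rfl, trivial, by simp⟩
  | c, y :: l => by
    by_cases hy : y ≤ c
    · obtain ⟨p, q, rfl, hp, hq⟩ := exists_append_eq (c + 1) l
      refine ⟨y :: p, q, rfl, ⟨hy, hp⟩, fun x hx => ?_⟩
      have := hq x hx
      simp only [List.length_cons]; omega
    · exact ⟨[], y :: l, rfl, trivial, by simpa using hy⟩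

lemma eq_of_append_eq : ∀ {c : ℕ} {p q p' q' : List ℕ}, p ++ q = p' ++ q' →
    DiagBounded c p → (∀ x ∈ q.head?, c + p.length < x) →
    DiagBounded c p' → (∀ x ∈ q'.head?, c + p'.length < x) → p = p'
  | _, [], _, [], _, _, _, _, _, _ => rfl
  | c, [], q, y :: p', q', h, _, hq, ⟨hy, _⟩, _ => by
    have := hq y (by rw [List.nil_append] at h; simp [h])
    omega
  | c, y :: p, q, [], q', h, ⟨hy, _⟩, _, _, hq' => by
    have := hq' y (by rw [List.nil_append] at h; simp [← h])
    omega
  | c, y :: p, q, y' :: p', q', h, ⟨_, hp⟩, hq, ⟨_, hp'⟩, hq' => by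
    simp only [List.cons_append, List.cons.injEq] at h
    rw [h.1, eq_of_append_eq h.2 hp (fun x hx => by have := hq x hx; simp at this ⊢; omega) hp'
      (fun x hx => by have := hq' x hx; simp at this ⊢; omega)]

end DiagBounded

namespace sortedFlaws

lemma append_of_diagBounded {n : ℕ} : ∀ {s : ℕ} {p : List ℕ} (q : List ℕ),
    DiagBounded (s + 1) p → s + p.length ≤ n →
      sortedFlaws n s (p ++ q) = sortedFlaws n (s + p.length) q
  | s, [], q, _, _ => rfl
  | s, x :: p, q, ⟨hx, hp⟩, hn => by
    simp only [List.length_cons] at hn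
    simp only [List.cons_append, sortedFlaws, Nat.max_eq_right hx, if_pos (show s + 1 ≤ n by omega)]
    rw [append_of_diagBounded q hp (by omega), List.length_cons, Nat.add_right_comm, Nat.add_assoc]

lemma of_le_state {n s : ℕ} (hs : n ≤ s) : ∀ l : List ℕ, sortedFlaws n s l = l.length
  | [] => rfl
  | p :: l => by
    rw [sortedFlaws, if_neg (by omega), of_le_state hs l, List.length_cons]

lemma of_diagBounded {n : ℕ} : ∀ {s : ℕ} {l : List ℕ},
    DiagBounded (s + 1) l → sortedFlaws n s l = l.length - (n - s)
  | s, [], _ => by simp [sortedFlaws]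
  | s, x :: l, ⟨hx, hl⟩ => by
    simp only [sortedFlaws, Nat.max_eq_right hx, List.length_cons]
    split_ifs with hs
    · rw [of_diagBounded hl]
      omega
    · rw [of_le_state (by omega)]
      omega

end sortedFlaws

/-- These are exactly the ordered preference sets of length `i` without flaws. -/
def catalanLists (i : ℕ) : Set (List ℕ) := {u | IsOrderedPrefSet i u ∧ DiagBounded 1 u}

lemma finite_catalanLists (i : ℕ) : (catalanLists i).Finite :=
  (finite_setOf_isPrefSet i).subset fun _ hu => hu.1.1

/-- First-return decomposition. -/
lemma cons_append_map_mem_catalanLists {i t r : ℕ} (htr : t + r = i) {d e : List ℕ}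
    (hd : d ∈ catalanLists t) (he : e ∈ catalanLists r) :
    1 :: (d ++ e.map (· + (t + 1))) ∈ catalanLists (i + 1) := by
  obtain ⟨⟨⟨hdlen, hdb⟩, hds⟩, hdd⟩ := hd
  obtain ⟨⟨⟨helen, heb⟩, hes⟩, hed⟩ := he
  have hdt : ∀ x ∈ d, x ≤ t := fun x hx => by have := hdd.lt_add_length x hx; omega
  refine ⟨⟨⟨by simp [hdlen, helen, ← htr], ?_⟩, ?_⟩, ?_⟩
  · simp only [List.mem_cons, List.mem_append, List.mem_map]
    rintro x (rfl | hx | ⟨y, hy, rfl⟩)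
    · omega
    · have := hdb x hx; omega
    · have := heb y hy; omega
  · refine List.pairwise_cons.mpr ⟨?_, List.pairwise_append.mpr ⟨hds, hes.map _ ?_, ?_⟩⟩
    · simp only [List.mem_append, List.mem_map]
      rintro x (hx | ⟨y, hy, rfl⟩)
      · exact (hdb x hx).1
      · omega
    · intro x y; omega
    · simp only [List.mem_map]
      rintro x hx _ ⟨y, hy, rfl⟩
      have := hdt x hx
      have := heb y hy
      omega
  · refine ⟨le_rfl, DiagBounded.append_iff.mpr ⟨hdd.mono (by omega), ?_⟩⟩
    rw [hdlen, show 1 + 1 + t = 1 + (t + 1) by omega]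
    exact DiagBounded.map_add_iff.mpr hed

lemma exists_cons_append_map_eq {i : ℕ} {u : List ℕ} (hu : u ∈ catalanLists (i + 1)) :
    ∃ t r, t + r = i ∧ ∃ d ∈ catalanLists t, ∃ e ∈ catalanLists r,
      1 :: (d ++ e.map (· + (t + 1))) = u := by
  obtain ⟨⟨⟨hlen, hb⟩, hs⟩, hu⟩ := hu
  obtain ⟨y, u, rfl⟩ := List.exists_cons_of_ne_nil (List.ne_nil_of_length_pos (l := u) (by omega))
  obtain ⟨hy, hu⟩ := hu
  obtain rfl : y = 1 := by have := hb y List.mem_cons_self; omega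
  obtain ⟨d, q, rfl, hd, hq⟩ := DiagBounded.exists_append_eq 1 u
  obtain ⟨-, hqd⟩ := DiagBounded.append_iff.mp hu
  have hsd := (List.pairwise_cons.mp hs).2
  have hqs := (List.pairwise_append.mp hsd).2.1
  have hqt : ∀ x ∈ q, d.length + 1 < x := fun x hx => by
    obtain ⟨z, q, rfl⟩ := List.exists_cons_of_ne_nil (List.ne_nil_of_mem hx)
    have := hq z rfl
    have := hqs.head_le rfl hx
    omega
  simp only [List.length_cons, List.length_append] at hlen
  refine ⟨d.length, q.length, by omega, d, ⟨⟨⟨rfl, fun x hx => ?_⟩, ?_⟩, hd⟩,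
    q.map (· - (d.length + 1)), ⟨⟨⟨by simp, ?_⟩, ?_⟩, ?_⟩, ?_⟩
  · have := hd.lt_add_length x hx
    have := hb x (by simp [hx])
    omega
  · exact hsd.sublist (List.sublist_append_left d q)
  · simp only [List.mem_map]
    rintro _ ⟨x, hx, rfl⟩
    have := hqt x hx
    have := hb x (by simp [hx])
    omega
  · exact hqs.map _ fun x y hxy => Nat.sub_le_sub_right hxy _
  · exact DiagBounded.map_sub (by rwa [show 1 + (d.length + 1) = 1 + 1 + d.length by omega])
  · rw [List.map_sub_map_add_cancel fun x hx => (hqt x hx).le]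

lemma cons_append_map_injective {t r t' r' : ℕ} {d e d' e' : List ℕ}
    (hd : d ∈ catalanLists t) (he : e ∈ catalanLists r) (hd' : d' ∈ catalanLists t')
    (he' : e' ∈ catalanLists r')
    (h : 1 :: (d ++ e.map (· + (t + 1))) = 1 :: (d' ++ e'.map (· + (t' + 1)))) :
    t = t' ∧ d = d' ∧ e = e' := by
  have head_gt : ∀ {t r : ℕ} {d e : List ℕ}, d ∈ catalanLists t → e ∈ catalanLists r →
      ∀ x ∈ (e.map (· + (t + 1))).head?, 1 + d.length < x := by
    intro t r d e hd he x hx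
    obtain ⟨y, hy, rfl⟩ := List.mem_map.mp (List.mem_of_mem_head? hx)
    have := (he.1.1.2 y hy).1
    rw [hd.1.1.1]
    omega
  rw [List.cons.injEq] at h
  obtain rfl := DiagBounded.eq_of_append_eq h.2 hd.2 (head_gt hd he) hd'.2 (head_gt hd' he')
  obtain rfl : t = t' := hd.1.1.1.symm.trans hd'.1.1.1
  exact ⟨rfl, rfl, List.map_injective_iff.mpr (add_left_injective _) (List.append_cancel_left h.2)⟩

lemma head?_eq_one_of_mem_catalanLists {i : ℕ} {u : List ℕ} (hi : 1 ≤ i)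
    (hu : u ∈ catalanLists i) : u.head? = some 1 := by
  obtain ⟨⟨⟨hulen, hub⟩, -⟩, hud⟩ := hu
  obtain ⟨y, u, rfl⟩ := List.exists_cons_of_ne_nil (List.ne_nil_of_length_pos (l := u) (by omega))
  have := hub y List.mem_cons_self
  have := hud.1
  simp only [List.head?_cons, Option.some.injEq]
  omega

open Finset.HasAntidiagonal in
lemma ncard_catalanLists (i : ℕ) : (catalanLists i).ncard = catalan i := by
  induction i using Nat.strong_induction_on with
  | _ i ih =>
  match i with
  | 0 =>
    rw [catalan_zero, Set.ncard_eq_one]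
    refine ⟨[], Set.eq_singleton_iff_unique_mem.mpr ⟨⟨⟨⟨rfl, by simp⟩, by simp⟩, trivial⟩, ?_⟩⟩
    exact fun u hu => List.eq_nil_of_length_eq_zero hu.1.1.1
  | i + 1 =>
    rw [catalan_succ', ncard_eq_sum_of_bij (antidiagonal i)
      (fun tr => (finite_catalanLists tr.1).prod (finite_catalanLists tr.2))
      (fun tr de => 1 :: (de.1 ++ de.2.map (· + (tr.1 + 1))))]
    · refine Finset.sum_congr rfl fun tr htr => ?_
      rw [Set.ncard_prod, ih _ (by simp at htr; omega), ih _ (by simp at htr; omega)]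
    · rintro ⟨t, r⟩ htr ⟨d, e⟩ ⟨hd, he⟩
      exact cons_append_map_mem_catalanLists (mem_antidiagonal.mp htr) hd he
    · rintro ⟨t, r⟩ htr ⟨t', r'⟩ htr' ⟨d, e⟩ ⟨hd, he⟩ ⟨d', e'⟩ ⟨hd', he'⟩ h
      obtain ⟨rfl, rfl, rfl⟩ := cons_append_map_injective hd he hd' he' h
      rw [mem_antidiagonal] at htr htr'
      obtain rfl : r = r' := by simp only at htr htr'; omega
      exact ⟨rfl, rfl⟩
    · intro u hu
      obtain ⟨t, r, htr, d, hd, e, he, rfl⟩ := exists_cons_append_map_eq hu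
      exact ⟨(t, r), mem_antidiagonal.mpr htr, (d, e), ⟨hd, he⟩, rfl⟩

lemma IsOrderedPrefSet.head_le_flaws_add_one {n j : ℕ} {a : List ℕ} (ha : IsOrderedPrefSet n a)
    (hj : j ∈ a.head?) : j ≤ flaws n a + 1 := by
  obtain ⟨⟨hlen, hb⟩, hs⟩ := ha
  have hjb := hb j (List.mem_of_mem_head? hj)
  have := sortedFlaws.length_le n (j - 1) a
  rw [flaws_eq_sortedFlaws hs fun x hx => (hb x hx).1,
    ← sortedFlaws.eq_zero_state_of_forall_lt (s := j - 1) fun x hx => by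
      have := hs.head_le hj hx; omega]
  omega

/-- A run that never jumps above the diagonal through `m` parks its cars in `m, m + 1, …, n`. -/
lemma IsOrderedPrefSet.flaws_of_diagBounded {n m : ℕ} {a : List ℕ} (ha : IsOrderedPrefSet n a)
    (hm : m ∈ a.head?) (hd : DiagBounded m a) : flaws n a = m - 1 := by
  obtain ⟨⟨hlen, hb⟩, hs⟩ := ha
  have hmb := hb m (List.mem_of_mem_head? hm)
  rw [flaws_eq_sortedFlaws hs fun x hx => (hb x hx).1,
    ← sortedFlaws.eq_zero_state_of_forall_lt (s := m - 1) fun x hx => by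
      have := hs.head_le hm hx; omega,
    sortedFlaws.of_diagBounded (by rwa [Nat.sub_add_cancel hmb.1]), hlen]
  omega

lemma sortedFlaws_append_map_add {n m i : ℕ} {u b : List ℕ} (hm : 1 ≤ m) (hu : u ∈ catalanLists i)
    (hb : ∀ x ∈ b, m < x) (hmi : m - 1 + i ≤ n) :
    sortedFlaws n 0 (u.map (· + (m - 1)) ++ b.map (· + i)) = sortedFlaws (n - i) 0 b := by
  obtain ⟨⟨⟨hulen, hub⟩, -⟩, hud⟩ := hu
  obtain ⟨n, rfl⟩ := Nat.exists_eq_add_of_le' (hmi.trans' (Nat.le_add_left i _))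
  have hpos : ∀ x ∈ u.map (· + (m - 1)) ++ b.map (· + i), m - 1 < x := by
    simp only [List.mem_append, List.mem_map]
    rintro _ (⟨x, hx, rfl⟩ | ⟨x, hx, rfl⟩)
    · have := (hub x hx).1; omega
    · have := hb x hx; omega
  rw [← sortedFlaws.eq_zero_state_of_forall_lt hpos, sortedFlaws.append_of_diagBounded _
    (by rw [Nat.sub_add_cancel hm]; exact hud.map_add_pred hm) (by simpa [hulen] using hmi),
    List.length_map, hulen, Nat.add_sub_cancel, sortedFlaws.map_add,
    sortedFlaws.eq_zero_state_of_forall_lt fun x hx => by have := hb x hx; omega]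

def leadSet (n k m : ℕ) : Set (List ℕ) :=
  {a | IsOrderedPrefSet n a ∧ flaws n a = k ∧ a.head? = some m}

lemma opLead_eq_ncard_leadSet (n k m : ℕ) : opLead n k m = (leadSet n k m).ncard := rfl

lemma finite_leadSet (n k m : ℕ) : (leadSet n k m).Finite :=
  (finite_setOf_isPrefSet n).subset fun _ ha => ha.1.1

section Decomposition

variable {n k m i : ℕ} {u b : List ℕ}

lemma map_sub_mem_catalanLists {p : List ℕ} (hm : 1 ≤ m) (hp : DiagBounded m p)
    (hs : p.Pairwise (· ≤ ·)) (hpm : ∀ x ∈ p, m ≤ x) :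
    p.map (· - (m - 1)) ∈ catalanLists p.length := by
  refine ⟨⟨⟨List.length_map _, ?_⟩, hs.map _ fun _ _ h => Nat.sub_le_sub_right h _⟩,
    DiagBounded.map_sub (by rwa [Nat.add_sub_cancel' hm])⟩
  simp only [List.mem_map]
  rintro _ ⟨y, hy, rfl⟩
  have := hpm y hy
  have := hp.lt_add_length y hy
  omega

lemma isOrderedPrefSet_append_map_iff (hu : u ∈ catalanLists i) (hb : ∀ x ∈ b, m < x)
    (hin : m - 1 + i ≤ n) :
    IsOrderedPrefSet n (u.map (· + (m - 1)) ++ b.map (· + i)) ↔ IsOrderedPrefSet (n - i) b := by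
  obtain ⟨⟨⟨hulen, hub⟩, hus⟩, -⟩ := hu
  unfold IsOrderedPrefSet IsPrefSet
  simp only [List.length_append, List.length_map, hulen, List.mem_append, List.mem_map,
    List.pairwise_append, List.pairwise_map, or_imp, forall_and, forall_exists_index, and_imp,
    forall_apply_eq_imp_iff₂, Nat.add_le_add_iff_right]
  have hi : i ≤ n := by omega
  have hu1 : ∀ x ∈ u, 1 ≤ x + (m - 1) := fun x hx => by have := hub x hx; omega
  have hun : ∀ x ∈ u, x + (m - 1) ≤ n := fun x hx => by have := hub x hx; omega
  have hb1 : ∀ x ∈ b, 1 ≤ x := fun x hx => by have := hb x hx; omega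
  have hbi : ∀ x ∈ b, 1 ≤ x + i := fun x hx => by have := hb x hx; omega
  have hcross : ∀ x ∈ u, ∀ y ∈ b, x + (m - 1) ≤ y + i := fun x hx y hy => by
    have := hub x hx; have := hb y hy; omega
  simp only [hus, true_and, Nat.le_sub_iff_add_le hi, eq_tsub_iff_add_eq_of_le hi, Nat.add_comm i]
  exact ⟨fun h => ⟨⟨h.1.1, hb1, h.1.2.2.2⟩, h.2.1⟩,
    fun h => ⟨⟨h.1.1, ⟨hu1, hbi⟩, hun, h.1.2.2⟩, h.2, hcross⟩⟩

lemma append_map_mem_leadSet_iff (hm : 1 ≤ m) (hi : 1 ≤ i) (hu : u ∈ catalanLists i)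
    (hb : ∀ x ∈ b, m < x) (hin : m - 1 + i ≤ n) :
    u.map (· + (m - 1)) ++ b.map (· + i) ∈ leadSet n k m ↔
      IsOrderedPrefSet (n - i) b ∧ flaws (n - i) b = k := by
  have hpref := isOrderedPrefSet_append_map_iff hu hb hin
  have hflaws (hbp : IsOrderedPrefSet (n - i) b) :
      flaws n (u.map (· + (m - 1)) ++ b.map (· + i)) = flaws (n - i) b := by
    have hp := hpref.mpr hbp
    rw [flaws_eq_sortedFlaws hp.2 fun x hx => (hp.1.2 x hx).1,
      flaws_eq_sortedFlaws hbp.2 fun x hx => (hbp.1.2 x hx).1,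
      sortedFlaws_append_map_add hm hu hb hin]
  have hhead : (u.map (· + (m - 1)) ++ b.map (· + i)).head? = some m := by
    obtain ⟨y, u, rfl⟩ := List.exists_cons_of_ne_nil (List.ne_nil_of_length_pos (l := u)
      (hu.1.1.1 ▸ hi))
    obtain rfl : y = 1 := by simpa using head?_eq_one_of_mem_catalanLists hi hu
    simp only [List.map_cons, List.cons_append, List.head?_cons, Option.some.injEq]
    omega
  exact ⟨fun ⟨hp, hk, _⟩ => ⟨hpref.mp hp, (hflaws (hpref.mp hp)).symm.trans hk⟩,
    fun ⟨hbp, hk⟩ => ⟨hpref.mpr hbp, (hflaws hbp).trans hk, hhead⟩⟩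

lemma append_map_mem_leadSet (hm : 1 ≤ m) (hmk : m ≤ k) {j : ℕ} (hmj : m < j) (hi : 1 ≤ i)
    (hik : i ≤ n - k) (hu : u ∈ catalanLists i) (hb : b ∈ leadSet (n - i) k j) :
    u.map (· + (m - 1)) ++ b.map (· + i) ∈ leadSet n k m :=
  (append_map_mem_leadSet_iff hm hi hu (fun _ hx => hmj.trans_le (hb.1.2.head_le hb.2.2 hx))
    (by omega)).mpr ⟨hb.1, hb.2.1⟩

lemma append_map_injective (hm : 1 ≤ m) {i' j j' : ℕ} {u' b' : List ℕ} (hmj : m < j) (hmj' : m < j')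
    (hu : u ∈ catalanLists i) (hb : b ∈ leadSet (n - i) k j)
    (hu' : u' ∈ catalanLists i') (hb' : b' ∈ leadSet (n - i') k j')
    (h : u.map (· + (m - 1)) ++ b.map (· + i) = u'.map (· + (m - 1)) ++ b'.map (· + i')) :
    (j, i) = (j', i') ∧ (u, b) = (u', b') := by
  have head_gt {i j : ℕ} {u b : List ℕ} (hmj : m < j) (hu : u ∈ catalanLists i)
      (hb : b ∈ leadSet (n - i) k j) :
      ∀ x ∈ (b.map (· + i)).head?, m + (u.map (· + (m - 1))).length < x := by
    rw [List.head?_map, hb.2.2, List.length_map, hu.1.1.1]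
    simp only [Option.map_some, Option.mem_some_iff]
    omega
  have hpre := DiagBounded.eq_of_append_eq h (hu.2.map_add_pred hm) (head_gt hmj hu hb)
    (hu'.2.map_add_pred hm) (head_gt hmj' hu' hb')
  obtain rfl : i = i' := by
    rw [← hu.1.1.1, ← hu'.1.1.1, ← List.length_map (f := (· + (m - 1))), hpre, List.length_map]
  obtain rfl := List.map_injective_iff.mpr (add_left_injective _) hpre
  obtain rfl := List.map_injective_iff.mpr (add_left_injective _) (List.append_cancel_left h)
  obtain rfl : j = j' := Option.some_injective _ (hb.2.2.symm.trans hb'.2.2)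
  exact ⟨rfl, rfl⟩

lemma exists_append_map_eq_of_mem_leadSet (hm : 1 ≤ m) (hmk : m ≤ k) {a : List ℕ}
    (ha : a ∈ leadSet n k m) : ∃ j i, (m < j ∧ j ≤ k + 1) ∧ (1 ≤ i ∧ i ≤ n - k) ∧
      ∃ u ∈ catalanLists i, ∃ b ∈ leadSet (n - i) k j,
        u.map (· + (m - 1)) ++ b.map (· + i) = a := by
  obtain ⟨hpref, hk, hh⟩ := id ha
  obtain ⟨⟨hlen, hab⟩, has⟩ := id hpref
  have ham : ∀ x ∈ a, m ≤ x := fun x hx => has.head_le hh hx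
  obtain ⟨p, q, rfl, hp, hq⟩ := DiagBounded.exists_append_eq m a
  obtain ⟨x, q, rfl⟩ : ∃ x q', q = x :: q' := by
    refine List.exists_cons_of_ne_nil fun hq => ?_
    subst hq
    rw [List.append_nil] at hpref hh hk
    have := hpref.flaws_of_diagBounded hh hp
    omega
  have hx : m + p.length < x := hq x rfl
  have hxn : x ≤ n := (hab x (by simp)).2
  have hqx : ∀ y ∈ x :: q, x ≤ y := fun y hy => (List.pairwise_append.mp has).2.1.head_le rfl hy
  have hpi : 1 ≤ p.length := by
    refine Nat.one_le_iff_ne_zero.mpr fun h0 => ?_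
    rw [List.length_eq_zero_iff.mp h0] at hh hx
    simp only [List.nil_append, List.head?_cons, Option.some.injEq] at hh
    omega
  have hu := map_sub_mem_catalanLists hm hp (List.pairwise_append.mp has).1
    fun y hy => ham y (by simp [hy])
  have hbm : ∀ y ∈ (x :: q).map (· - p.length), m < y := by
    simp only [List.mem_map]
    rintro _ ⟨y, hy, rfl⟩
    have := hqx y hy
    omega
  have hsplit : (p.map (· - (m - 1))).map (· + (m - 1)) ++
      ((x :: q).map (· - p.length)).map (· + p.length) = p ++ x :: q := by
    rw [List.map_sub_map_add_cancel fun y hy => by have := ham y (by simp [hy]); omega,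
      List.map_sub_map_add_cancel fun y hy => by have := hqx y hy; omega]
  obtain ⟨hbp, hbk⟩ := (append_map_mem_leadSet_iff hm hpi hu hbm (by omega)).mp (hsplit ▸ ha)
  have hbh : ((x :: q).map (· - p.length)).head? = some (x - p.length) := rfl
  refine ⟨x - p.length, p.length, ⟨by omega, ?_⟩, ⟨hpi, ?_⟩, _, hu, _, ⟨hbp, hbk, hbh⟩, hsplit⟩
  · have := hbp.head_le_flaws_add_one hbh
    omega
  · have := flaws_le_length (n - p.length) ((x :: q).map (· - p.length))
    rw [hbp.1.1] at this
    omega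

end Decomposition

theorem stmt16_general (n k m : ℕ) (hm : 1 ≤ m) (hmk : m ≤ k) :
    opLead n k m
      = ∑ j ∈ Finset.Icc (m + 1) (k + 1), ∑ i ∈ Finset.Icc 1 (n - k),
          catalan i * opLead (n - i) k j := by
  rw [← Finset.sum_product' (f := fun j i => catalan i * opLead (n - i) k j),
    opLead_eq_ncard_leadSet n k m]
  refine ncard_eq_sum_of_bij (Finset.Icc (m + 1) (k + 1) ×ˢ Finset.Icc 1 (n - k))
    (fun ji : ℕ × ℕ => (finite_catalanLists ji.2).prod (finite_leadSet (n - ji.2) k ji.1))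
    (fun ji ub => ub.1.map (· + (m - 1)) ++ ub.2.map (· + ji.2)) ?_ ?_ ?_ |>.trans ?_
  · rintro ⟨j, i⟩ hji ⟨u, b⟩ ⟨hu, hb⟩
    simp only [Finset.mem_product, Finset.mem_Icc] at hji
    exact append_map_mem_leadSet hm hmk (by omega) hji.2.1 hji.2.2 hu hb
  · rintro ⟨j, i⟩ hji ⟨j', i'⟩ hji' ⟨u, b⟩ ⟨hu, hb⟩ ⟨u', b'⟩ ⟨hu', hb'⟩ h
    simp only [Finset.mem_product, Finset.mem_Icc] at hji hji'
    exact append_map_injective hm (by omega) (by omega) hu hb hu' hb' h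
  · intro a ha
    obtain ⟨j, i, hj, hi, u, hu, b, hb, rfl⟩ := exists_append_map_eq_of_mem_leadSet hm hmk ha
    exact ⟨(j, i), by simp only [Finset.mem_product, Finset.mem_Icc]; omega, (u, b), ⟨hu, hb⟩, rfl⟩
  · refine Finset.sum_congr rfl fun ji _ => ?_
    rw [Set.ncard_prod, ncard_catalanLists]
    rfl

theorem stmt16 (n k m : ℕ) (hm : 1 ≤ m) (hmk : m ≤ k) (hn : k + 1 ≤ n) :
    opLead n k m
      = ∑ j ∈ Finset.Icc (m + 1) (k + 1), ∑ i ∈ Finset.Icc 1 (n - k),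
          catalan i * opLead (n - i) k j :=
  stmt16_general n k m hm hmk
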